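/- (Impossibility of ideal routing on the square cluster by local passive optics.) Let s > 0 with s ≠ 1, let Γ be the covariance matrix of the square cluster state (Γ = S·Γ_sqz(4,s)·Sᵀ with S built from the 4-cycle adjacency matrix A_sq = [[0,1,1,0],[1,0,0,1],[1,0,0,1],[0,1,1,0]] via X = (1+A_sq²)^{-1/2}, Y = A_sq X, S = fromBlocks X (−Y) Y X), written in ordering (Q₁,Q₂,P₁,P₂,Q₃,Q₄,P₃,P₄) where Alice holds modes {1,2} and Bob modes {3,4}. For any 2×2 complex unitaries U_A, U_B, let S_A = fromBlocks (Re U_A) (−Im U_A) (Im U_A) (Re U_A) and similarly S_B, and let Γ' = blockdiag(S_A,S_B) · Γ · blockdiag(S_A,S_B)ᵀ. Then for every Alice mode a ∈ {1,2} and Bob mode b ∈ {3,4}, the 4×4 reduced matrix of Γ' on the quadratures (Q_a, Q_b, P_a, P_b) is NOT equal to Γ_EPR((s+s⁻¹)/2, (s−s⁻¹)/2). Hence no local passive linear-optical transformation extracts a perfect EPR pair between Alice and Bob from the square cluster. -/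

import Mathlib

/-!
Encode a passive map by its complex unitary `U`, and a covariance matrix `Γ` in `(Q, P)` ordering
by its anomalous correlation `(Γ_QQ - Γ_PP) + i (Γ_QP + Γ_PQ)`. Local passive optics act on the
Alice–Bob block `C` of the latter by `C ↦ U_A C U_Bᵀ`. For the square cluster
`C = (s - s⁻¹)/5 • N` with `N Nᴴ = 20`, so every entry of `U_A N U_Bᵀ` has modulus at most `√20`.
An EPR pair between Alice's mode `a` and Bob's mode `b` forces the `(a, b)` entry of the
transformed block to be `i (s - s⁻¹)`, i.e. the entry of `U_A N U_Bᵀ` to be `5 i`.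
-/

open Matrix

noncomputable section

/-- For a real symmetric matrix `A`, the matrix `1 + A²` is positive definite. -/
theorem onePlusSq_posDef {n : ℕ} (A : Matrix (Fin n) (Fin n) ℝ) (hA : Aᵀ = A) :
    (1 + A * A).PosDef := by
  have h2 : (A * A).PosSemidef := by
    have h := Matrix.posSemidef_conjTranspose_mul_self A
    simpa [Matrix.conjTranspose_eq_transpose_of_trivial, hA] using h
  exact Matrix.PosDef.add_posSemidef Matrix.PosDef.one h2

open scoped MatrixOrder in
/-- `(1 + A²)^{-1/2}`: the inverse of the unique positive-definite square root of `1 + A²`. -/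
def invSqrtOnePlusSq {n : ℕ} (A : Matrix (Fin n) (Fin n) ℝ) (hA : Aᵀ = A) :
    Matrix (Fin n) (Fin n) ℝ :=
  (CFC.sqrt (1 + A * A))⁻¹

/-- Covariance matrix `diag(s,…,s,s⁻¹,…,s⁻¹)` of `n` equally squeezed vacuum modes. -/
def GammaSqz (n : ℕ) (s : ℝ) : Matrix (Fin n ⊕ Fin n) (Fin n ⊕ Fin n) ℝ :=
  Matrix.fromBlocks (s • 1) 0 0 (s⁻¹ • 1)

/-- The 4×4 EPR covariance matrix with diagonal entries `l` and antidiagonal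
entries `m`, in ordering `(Q₁,Q₂,P₁,P₂)`. -/
def GammaEPR (l m : ℝ) : Matrix (Fin 2 ⊕ Fin 2) (Fin 2 ⊕ Fin 2) ℝ :=
  Matrix.fromBlocks (l • 1) (m • !![0,1;1,0]) (m • !![0,1;1,0]) (l • 1)

/-- Adjacency matrix of the 4-cycle with edges {1,2},{1,3},{2,4},{3,4}. -/
def Asq : Matrix (Fin 4) (Fin 4) ℝ := !![0,1,1,0; 1,0,0,1; 1,0,0,1; 0,1,1,0]

theorem Asq_symm : Asqᵀ = Asq := by
  ext i j
  fin_cases i <;> fin_cases j <;> simp [Asq, Matrix.transpose_apply]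

/-- Covariance matrix of the square cluster state built with squeezing `s`,
in global quadrature ordering `(Q₁,…,Q₄,P₁,…,P₄)`. -/
def GammaSquare (s : ℝ) : Matrix (Fin 4 ⊕ Fin 4) (Fin 4 ⊕ Fin 4) ℝ :=
  Matrix.fromBlocks (invSqrtOnePlusSq Asq Asq_symm) (-(Asq * invSqrtOnePlusSq Asq Asq_symm))
      (Asq * invSqrtOnePlusSq Asq Asq_symm) (invSqrtOnePlusSq Asq Asq_symm) *
    GammaSqz 4 s *
    (Matrix.fromBlocks (invSqrtOnePlusSq Asq Asq_symm) (-(Asq * invSqrtOnePlusSq Asq Asq_symm))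
        (Asq * invSqrtOnePlusSq Asq Asq_symm) (invSqrtOnePlusSq Asq Asq_symm))ᵀ

/-- Reindexing from the party-local ordering `(Q₁,Q₂,P₁,P₂,Q₃,Q₄,P₃,P₄)`
(Alice holds modes 1,2; Bob modes 3,4) into the global ordering `(Q₁,…,Q₄,P₁,…,P₄)`. -/
def sqIdx : (Fin 2 ⊕ Fin 2) ⊕ (Fin 2 ⊕ Fin 2) → Fin 4 ⊕ Fin 4
  | Sum.inl (Sum.inl i) => Sum.inl ⟨i.val, by omega⟩
  | Sum.inl (Sum.inr i) => Sum.inr ⟨i.val, by omega⟩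
  | Sum.inr (Sum.inl i) => Sum.inl ⟨i.val + 2, by omega⟩
  | Sum.inr (Sum.inr i) => Sum.inr ⟨i.val + 2, by omega⟩

/-- Real part of a complex matrix. -/
def reM (U : Matrix (Fin 2) (Fin 2) ℂ) : Matrix (Fin 2) (Fin 2) ℝ :=
  Matrix.of fun i j => (U i j).re

/-- Imaginary part of a complex matrix. -/
def imM (U : Matrix (Fin 2) (Fin 2) ℂ) : Matrix (Fin 2) (Fin 2) ℝ :=
  Matrix.of fun i j => (U i j).im

/-- Passive symplectic transformation of a 2-mode party associated to a 2×2 complex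
unitary `U`. -/
def passive2 (U : Matrix (Fin 2) (Fin 2) ℂ) : Matrix (Fin 2 ⊕ Fin 2) (Fin 2 ⊕ Fin 2) ℝ :=
  Matrix.fromBlocks (reM U) (-imM U) (imM U) (reM U)

/-- Quadrature indices `(Q_a, Q_b, P_a, P_b)` of Alice's local mode `a` and Bob's
local mode `b` in the party-local ordering. -/
def pairEmb (a b : Fin 2) : Fin 2 ⊕ Fin 2 → (Fin 2 ⊕ Fin 2) ⊕ (Fin 2 ⊕ Fin 2)
  | Sum.inl i => if i = 0 then Sum.inl (Sum.inl a) else Sum.inr (Sum.inl b)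
  | Sum.inr i => if i = 0 then Sum.inl (Sum.inr a) else Sum.inr (Sum.inr b)

open Complex

section Complexification

variable {l m n p : Type*}

def complexOfParts (X Y : Matrix m n ℝ) : Matrix m n ℂ :=
  X.map ofRealHom + I • Y.map ofRealHom

lemma complexOfParts_apply (X Y : Matrix m n ℝ) (i : m) (j : n) :
    complexOfParts X Y i j = X i j + I * Y i j := rfl

lemma complexOfParts_transpose (X Y : Matrix m n ℝ) :
    (complexOfParts X Y)ᵀ = complexOfParts Xᵀ Yᵀ := rfl

lemma complexOfParts_mul [Fintype m] (X Y : Matrix l m ℝ) (Z W : Matrix m n ℝ) :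
    complexOfParts X Y * complexOfParts Z W =
      complexOfParts (X * Z - Y * W) (X * W + Y * Z) := by
  simp only [complexOfParts, Matrix.map_mul, Matrix.map_sub _ (map_sub ofRealHom),
    Matrix.map_add _ (map_add ofRealHom), Matrix.add_mul, Matrix.mul_add, Matrix.smul_mul,
    Matrix.mul_smul, smul_add, smul_smul, I_mul_I, neg_one_smul]
  abel

lemma complexOfParts_reM_imM (U : Matrix (Fin 2) (Fin 2) ℂ) :
    complexOfParts (reM U) (imM U) = U := by
  ext i j
  simp [complexOfParts_apply, reM, imM, mul_comm I]

/-- For `a = Q + iP`, the symmetrized correlation `⟨aᵢ aⱼ⟩` of a covariance matrix in `(Q, P)`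
ordering. -/
def anomalousCorr (M : Matrix (m ⊕ m) (n ⊕ n) ℝ) : Matrix m n ℂ :=
  complexOfParts (M.toBlocks₁₁ - M.toBlocks₂₂) (M.toBlocks₁₂ + M.toBlocks₂₁)

lemma anomalousCorr_fromBlocks_mul_mul_transpose [Fintype m] [Fintype n]
    (A B : Matrix l m ℝ) (M : Matrix (m ⊕ m) (n ⊕ n) ℝ) (C D : Matrix p n ℝ) :
    anomalousCorr (fromBlocks A (-B) B A * M * (fromBlocks C (-D) D C)ᵀ) =
      complexOfParts A B * anomalousCorr M * (complexOfParts C D)ᵀ := by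
  rw [← fromBlocks_toBlocks M, complexOfParts_transpose, anomalousCorr, anomalousCorr,
    complexOfParts_mul, complexOfParts_mul]
  simp only [fromBlocks_transpose, transpose_neg, fromBlocks_multiply, toBlocks_fromBlocks₁₁,
    toBlocks_fromBlocks₁₂, toBlocks_fromBlocks₂₁, toBlocks_fromBlocks₂₂, Matrix.add_mul,
    Matrix.mul_add, Matrix.sub_mul, Matrix.mul_sub, Matrix.neg_mul, Matrix.mul_neg, Matrix.mul_assoc]
  congr 1 <;> abel

lemma anomalousCorr_GammaSqz (k : ℕ) (s : ℝ) :
    anomalousCorr (GammaSqz k s) = ((s - s⁻¹ : ℝ) : ℂ) • 1 := by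
  ext i j
  by_cases h : i = j <;> simp [anomalousCorr, complexOfParts_apply, GammaSqz, h]

end Complexification

lemma toBlocks₁₂_fromBlocks_mul_mul_transpose {R k k' m n : Type*} [CommRing R] [Fintype m]
    [Fintype n] (P : Matrix k m R) (Q : Matrix k' n R) (M : Matrix (m ⊕ n) (m ⊕ n) R) :
    (fromBlocks P 0 0 Q * M * (fromBlocks P 0 0 Q)ᵀ).toBlocks₁₂ = P * M.toBlocks₁₂ * Qᵀ := by
  rw [← fromBlocks_toBlocks M]
  simp [fromBlocks_transpose, fromBlocks_multiply]

lemma normSq_apply_le_of_mul_conjTranspose_eq {m n : Type*} [Fintype n] [DecidableEq m]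
    {G : Matrix m n ℂ} {c : ℝ} (hG : G * Gᴴ = (c : ℂ) • 1) (i : m) (j : n) :
    normSq (G i j) ≤ c := by
  have hrow : ∑ k, normSq (G i k) = c := by
    have := congrFun₂ hG i i
    simp only [Matrix.mul_apply, conjTranspose_apply, Matrix.smul_apply, Matrix.one_apply_eq,
      smul_eq_mul, mul_one, RCLike.star_def, mul_conj] at this
    exact_mod_cast this
  exact hrow ▸ Finset.single_le_sum (fun k _ => normSq_nonneg (G i k)) (Finset.mem_univ j)

lemma mul_mul_transpose_mul_conjTranspose_of_unitary {m n : Type*} [Fintype m] [Fintype n]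
    [DecidableEq m] [DecidableEq n] {U : Matrix m m ℂ} {V : Matrix n n ℂ}
    (hU : U ∈ unitaryGroup m ℂ) (hV : V ∈ unitaryGroup n ℂ) {N : Matrix m n ℂ} {c : ℂ}
    (hN : N * Nᴴ = c • 1) :
    (U * N * Vᵀ) * (U * N * Vᵀ)ᴴ = c • 1 := by
  have hVt : Vᵀ * Vᵀᴴ = 1 := by
    have := congrArg transpose (mem_unitaryGroup_iff'.mp hV)
    rwa [transpose_mul, transpose_one] at this
  calc (U * N * Vᵀ) * (U * N * Vᵀ)ᴴ = U * (N * (Vᵀ * Vᵀᴴ) * Nᴴ) * Uᴴ := by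
        simp only [conjTranspose_mul, Matrix.mul_assoc]
    _ = c • 1 := by
        rw [hVt, Matrix.mul_one, hN, Matrix.mul_smul, Matrix.mul_one, Matrix.smul_mul,
          ← star_eq_conjTranspose, mem_unitaryGroup_iff.mp hU]

section InvSqrt

variable {k : ℕ} (A : Matrix (Fin k) (Fin k) ℝ) (hA : Aᵀ = A)

open scoped MatrixOrder in
lemma invSqrtOnePlusSq_mul_self :
    invSqrtOnePlusSq A hA * invSqrtOnePlusSq A hA = (1 + A * A)⁻¹ := by
  rw [invSqrtOnePlusSq, ← Matrix.mul_inv_rev,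
    CFC.sqrt_mul_sqrt_self _ (onePlusSq_posDef A hA).posSemidef.nonneg]

open scoped MatrixOrder in
lemma transpose_invSqrtOnePlusSq : (invSqrtOnePlusSq A hA)ᵀ = invSqrtOnePlusSq A hA := by
  rw [invSqrtOnePlusSq, transpose_nonsing_inv,
    ← conjTranspose_eq_transpose_of_trivial,
    (nonneg_iff_posSemidef.mp (CFC.sqrt_nonneg (1 + A * A))).isHermitian.eq]

end InvSqrt

lemma complexOfParts_mul_transpose_of_symm {k : Type*} [Fintype k] (X A : Matrix k k ℝ)
    (hX : Xᵀ = X) (hA : Aᵀ = A) :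
    complexOfParts X (A * X) * (complexOfParts X (A * X))ᵀ =
      complexOfParts (X * X - A * (X * X) * A) (X * X * A + A * (X * X)) := by
  rw [complexOfParts_transpose, complexOfParts_mul, transpose_mul, hX, hA]
  congr 1 <;> noncomm_ring

lemma Asq_mul_Asq_mul_Asq : Asq * (Asq * Asq) = (4 : ℝ) • Asq := by
  ext i j
  fin_cases i <;> fin_cases j <;> simp [Asq, Matrix.mul_apply, Fin.sum_univ_four] <;> norm_num

lemma inv_one_add_Asq_mul_Asq : (1 + Asq * Asq)⁻¹ = 1 - (5 : ℝ)⁻¹ • (Asq * Asq) := by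
  refine inv_eq_right_inv ?_
  simp only [Matrix.add_mul, Matrix.mul_sub, Matrix.mul_one, Matrix.one_mul, Matrix.mul_smul,
    Matrix.mul_assoc, Asq_mul_Asq_mul_Asq]
  module

lemma anomalousCorr_GammaSquare (s : ℝ) :
    anomalousCorr (GammaSquare s) =
      ((s - s⁻¹ : ℝ) : ℂ) •
        complexOfParts (1 - (2 / 5 : ℝ) • (Asq * Asq)) ((2 / 5 : ℝ) • Asq) := by
  rw [GammaSquare, anomalousCorr_fromBlocks_mul_mul_transpose, anomalousCorr_GammaSqz,
    Matrix.mul_smul, Matrix.mul_one, Matrix.smul_mul,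
    complexOfParts_mul_transpose_of_symm _ _ (transpose_invSqrtOnePlusSq Asq Asq_symm) Asq_symm,
    invSqrtOnePlusSq_mul_self, inv_one_add_Asq_mul_Asq]
  congr 2 <;>
  · simp only [Matrix.sub_mul, Matrix.mul_sub, Matrix.smul_mul, Matrix.mul_smul, Matrix.one_mul,
      Matrix.mul_one, Matrix.mul_assoc, Asq_mul_Asq_mul_Asq]
    module

lemma anomalousCorr_toBlocks₁₂_submatrix_sqIdx_apply
    (M : Matrix (Fin 4 ⊕ Fin 4) (Fin 4 ⊕ Fin 4) ℝ) (a b : Fin 2) :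
    anomalousCorr (M.submatrix sqIdx sqIdx).toBlocks₁₂ a b =
      anomalousCorr M ⟨a, by omega⟩ ⟨b + 2, by omega⟩ := rfl

def squareCrossCorr : Matrix (Fin 2) (Fin 2) ℂ := !![2 * I, -4; -4, 2 * I]

lemma anomalousCorr_GammaSquare_toBlocks₁₂ (s : ℝ) :
    anomalousCorr ((GammaSquare s).submatrix sqIdx sqIdx).toBlocks₁₂ =
      (((s - s⁻¹) / 5 : ℝ) : ℂ) • squareCrossCorr := by
  ext a b
  rw [anomalousCorr_toBlocks₁₂_submatrix_sqIdx_apply, anomalousCorr_GammaSquare]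
  fin_cases a <;> fin_cases b <;>
  · simp [complexOfParts_apply, squareCrossCorr, Asq]
    ring

lemma squareCrossCorr_mul_conjTranspose :
    squareCrossCorr * squareCrossCorrᴴ = ((20 : ℝ) : ℂ) • 1 := by
  ext i j
  fin_cases i <;> fin_cases j <;>
  · simp [squareCrossCorr, Matrix.mul_apply, Complex.ext_iff]
    norm_num

lemma anomalousCorr_toBlocks₁₂_apply_of_submatrix_pairEmb_eq_GammaEPR
    {N : Matrix ((Fin 2 ⊕ Fin 2) ⊕ (Fin 2 ⊕ Fin 2)) ((Fin 2 ⊕ Fin 2) ⊕ (Fin 2 ⊕ Fin 2)) ℝ}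
    {a b : Fin 2} {l m : ℝ} (h : N.submatrix (pairEmb a b) (pairEmb a b) = GammaEPR l m) :
    anomalousCorr N.toBlocks₁₂ a b = 2 * m * I := by
  have hQQ := congrFun₂ h (Sum.inl 0) (Sum.inl 1)
  have hQP := congrFun₂ h (Sum.inl 0) (Sum.inr 1)
  have hPQ := congrFun₂ h (Sum.inr 0) (Sum.inl 1)
  have hPP := congrFun₂ h (Sum.inr 0) (Sum.inr 1)
  simp [pairEmb, GammaEPR] at hQQ hQP hPQ hPP
  simp only [anomalousCorr, complexOfParts_apply, toBlocks₁₁, toBlocks₁₂, toBlocks₂₁, toBlocks₂₂,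
    of_apply, Matrix.sub_apply, Matrix.add_apply, hQQ, hQP, hPQ, hPP]
  push_cast
  ring

/-- Impossibility of ideal routing on the square cluster by local passive optics:
for every `s ≠ 1` and all 2×2 complex unitaries `U_A`, `U_B` applied locally by Alice
(modes 1,2) and Bob (modes 3,4), no pair of modes `(a, b)` of Alice and Bob ends up
in the perfect EPR state `Γ_EPR((s+s⁻¹)/2, (s−s⁻¹)/2)`. -/
theorem square_routing_impossible (s : ℝ) (hs : 0 < s) (hs1 : s ≠ 1)
    (U_A U_B : Matrix (Fin 2) (Fin 2) ℂ)
    (hUA : U_A ∈ Matrix.unitaryGroup (Fin 2) ℂ)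
    (hUB : U_B ∈ Matrix.unitaryGroup (Fin 2) ℂ) :
    ∀ a b : Fin 2,
      (Matrix.fromBlocks (passive2 U_A) 0 0 (passive2 U_B) *
            (GammaSquare s).submatrix sqIdx sqIdx *
            (Matrix.fromBlocks (passive2 U_A) 0 0 (passive2 U_B))ᵀ).submatrix
          (pairEmb a b) (pairEmb a b) ≠
        GammaEPR ((s + s⁻¹) / 2) ((s - s⁻¹) / 2) := by
  intro a b h
  have hcorr := anomalousCorr_toBlocks₁₂_apply_of_submatrix_pairEmb_eq_GammaEPR h
  rw [toBlocks₁₂_fromBlocks_mul_mul_transpose, passive2, passive2,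
    anomalousCorr_fromBlocks_mul_mul_transpose, complexOfParts_reM_imM, complexOfParts_reM_imM,
    anomalousCorr_GammaSquare_toBlocks₁₂, Matrix.mul_smul, Matrix.smul_mul] at hcorr
  have hbound := normSq_apply_le_of_mul_conjTranspose_eq
    (mul_mul_transpose_mul_conjTranspose_of_unitary hUA hUB squareCrossCorr_mul_conjTranspose) a b
  have hr : s - s⁻¹ ≠ 0 := by
    intro h0
    have : s * s = 1 := by field_simp at h0; linarith
    exact hs1 (by nlinarith)
  have hentry : (U_A * squareCrossCorr * U_Bᵀ) a b = 5 * I := by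
    rw [Matrix.smul_apply, smul_eq_mul] at hcorr
    refine mul_left_cancel₀ (ofReal_ne_zero.mpr hr) ?_
    push_cast at hcorr ⊢
    linear_combination 5 * hcorr
  rw [hentry] at hbound
  norm_num [normSq_apply] at hbound
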